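/- The set of finite infixes of the Thue–Morse sequence is downwards closed for the infix relation, is well-quasi-ordered by the infix relation, and is not a bounded language. -/

import Mathlib

/-- The `p`-fold concatenation of the word `x`. -/
def wpow {A : Type*} (x : List A) (p : ℕ) : List A := (List.replicate p x).flatten

/-- A finite word `u` is an infix of the infinite word `w : ℕ → A`. -/
def IsInfInfix {A : Type*} (w : ℕ → A) (u : List A) : Prop :=
  ∃ i : ℕ, u = (List.range u.length).map fun j => w (i + j)

/-- A subset `L` of words is well-quasi-ordered by the relation `r`. -/
def IsWqoOn {A : Type*} (L : Set (List A)) (r : List A → List A → Prop) : Prop :=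
  ∀ f : ℕ → List A, (∀ n, f n ∈ L) → ∃ i j, i < j ∧ r (f i) (f j)

/-- A language is bounded if it is contained in `w₁* ⋯ w_n*` for some words `wᵢ`. -/
def IsBoundedLang {A : Type*} (L : Set (List A)) : Prop :=
  ∃ (n : ℕ) (w : Fin n → List A), ∀ u ∈ L, ∃ c : Fin n → ℕ,
    u = (List.ofFn fun i : Fin n => wpow (w i) (c i)).flatten

/-- The Thue–Morse sequence: `thueMorse n` is the parity of the number of ones in
the binary expansion of `n`. -/
def thueMorse (n : ℕ) : Bool := decide (Odd ((Nat.digits 2 n).count 1))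

/-! Write `t` for `thueMorse`. From `t (2 * n) = t n` and `t (2 * n + 1) = !t n` one gets
`t (2 ^ k * m + r) = xor (t m) (t r)` for `r < 2 ^ k`, so the aligned block of length `2 ^ k` at
`2 ^ k * m` is the prefix of length `2 ^ k` as soon as `t m = false`, which holds for `m = 2 * m'`
or for `m = 2 * m' + 1`. Hence every infix of length `2 ^ (k + 2)` contains that prefix:
the infixes form a uniformly recurrent language, and such a language over a finite alphabet is
well-quasi-ordered by the infix relation (the first word of a sequence lies in every later long
word, and there are only finitely many short ones).

A bounded language with arbitrarily long words contains arbitrarily high powers `x ^ m` with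
`x ≠ []`. But `t` has no infix `x ^ 4`: a period `p` on `4 * p` letters halves to a period `p / 2`
when `p` is even, and forces three equal consecutive letters when `p` is odd. -/

section Words

variable {A : Type*}

def infixAt (w : ℕ → A) (i n : ℕ) : List A := (List.range n).map fun j => w (i + j)

@[simp]
theorem length_infixAt (w : ℕ → A) (i n : ℕ) : (infixAt w i n).length = n := by
  simp [infixAt]

theorem getElem?_infixAt (w : ℕ → A) {i n j : ℕ} (hj : j < n) :
    (infixAt w i n)[j]? = some (w (i + j)) := by
  simp [infixAt, hj]

theorem infixAt_add (w : ℕ → A) (i a b : ℕ) :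
    infixAt w i (a + b) = infixAt w i a ++ infixAt w (i + a) b := by
  simp only [infixAt, List.range_add, List.map_append, List.map_map, Function.comp_def, add_assoc]

theorem infixAt_isInfix_infixAt (w : ℕ → A) {i n i' n' : ℕ} (h₁ : i' ≤ i)
    (h₂ : i + n ≤ i' + n') : infixAt w i n <:+: infixAt w i' n' := by
  obtain ⟨a, rfl⟩ := Nat.exists_eq_add_of_le h₁
  obtain ⟨b, rfl⟩ : ∃ b, n' = a + (n + b) := ⟨n' - (a + n), by omega⟩
  rw [infixAt_add, infixAt_add]
  exact List.infix_append' _ _ _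

theorem isInfInfix_infixAt (w : ℕ → A) (i n : ℕ) : IsInfInfix w (infixAt w i n) :=
  ⟨i, by rw [length_infixAt]; rfl⟩

theorem IsInfInfix.exists_eq_infixAt {w : ℕ → A} {u : List A} (hu : IsInfInfix w u) :
    ∃ i, u = infixAt w i u.length :=
  hu

theorem IsInfInfix.of_isInfix {w : ℕ → A} {u v : List A} (hv : IsInfInfix w v)
    (huv : u <:+: v) : IsInfInfix w u := by
  obtain ⟨i, hi⟩ := hv.exists_eq_infixAt
  obtain ⟨s, t, rfl⟩ := huv
  refine ⟨i + s.length, ?_⟩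
  rw [show (s ++ u ++ t).length = s.length + (u.length + t.length) by simp,
    infixAt_add, infixAt_add, List.append_assoc] at hi
  exact (List.append_inj (List.append_inj hi (by simp)).2 (by simp)).1

@[simp]
theorem wpow_zero (x : List A) : wpow x 0 = [] := rfl

theorem wpow_succ' (x : List A) (m : ℕ) : wpow x (m + 1) = x ++ wpow x m := by
  simp [wpow, List.replicate_succ]

theorem wpow_add (x : List A) (a b : ℕ) : wpow x (a + b) = wpow x a ++ wpow x b := by
  rw [wpow, List.replicate_add, List.flatten_append, wpow, wpow]

theorem wpow_succ (x : List A) (m : ℕ) : wpow x (m + 1) = wpow x m ++ x := by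
  rw [wpow_add, wpow_succ', wpow_zero, List.append_nil]

@[simp]
theorem length_wpow (x : List A) (m : ℕ) : (wpow x m).length = m * x.length := by
  simp [wpow]

theorem wpow_isInfix_wpow (x : List A) {m n : ℕ} (h : m ≤ n) : wpow x m <:+: wpow x n := by
  obtain ⟨k, rfl⟩ := Nat.exists_eq_add_of_le h
  rw [wpow_add]
  exact (List.prefix_append _ _).isInfix

theorem getElem?_wpow_succ_add_length (x : List A) {m j : ℕ} (hj : j < m * x.length) :
    (wpow x (m + 1))[j + x.length]? = (wpow x (m + 1))[j]? := by
  conv_lhs => rw [wpow_succ']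
  rw [wpow_succ, List.getElem?_append_right (by omega), List.getElem?_append_left (by simpa),
    Nat.add_sub_cancel]

theorem IsInfInfix.exists_periodicOn_of_wpow {w : ℕ → A} {x : List A} {m : ℕ}
    (h : IsInfInfix w (wpow x (m + 1))) :
    ∃ i, ∀ j < m * x.length, w (i + j) = w (i + j + x.length) := by
  obtain ⟨i, hi⟩ := h.exists_eq_infixAt
  refine ⟨i, fun j hj => ?_⟩
  have := getElem?_wpow_succ_add_length x hj
  rw [hi, length_wpow, getElem?_infixAt _ (by nlinarith), getElem?_infixAt _ (by nlinarith),
    ← add_assoc] at this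
  exact (Option.some.inj this).symm


def IsUniformlyRecurrent (L : Set (List A)) : Prop :=
  ∀ u ∈ L, ∃ N, ∀ v ∈ L, N ≤ v.length → u <:+: v

theorem IsUniformlyRecurrent.isWqoOn_infix [Finite A] {L : Set (List A)}
    (hL : IsUniformlyRecurrent L) : IsWqoOn L (· <:+: ·) := by
  intro f hf
  obtain ⟨N, hN⟩ := hL (f 0) (hf 0)
  by_cases hlong : ∃ j, 0 < j ∧ N ≤ (f j).length
  · obtain ⟨j, hj, hjN⟩ := hlong
    exact ⟨0, j, hj, hN (f j) (hf j) hjN⟩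
  push Not at hlong
  have : Finite {l : List A | l.length < N} := (List.finite_length_lt A N).to_subtype
  obtain ⟨a, b, hab, he⟩ := Finite.exists_ne_map_eq_of_infinite
    fun j : ℕ => (⟨f (j + 1), hlong (j + 1) j.succ_pos⟩ : {l : List A | l.length < N})
  have he : f (a + 1) = f (b + 1) := congrArg Subtype.val he
  rcases hab.lt_or_gt with hlt | hlt
  · exact ⟨a + 1, b + 1, by omega, he ▸ List.infix_refl _⟩
  · exact ⟨b + 1, a + 1, by omega, he ▸ List.infix_refl _⟩

theorem IsBoundedLang.exists_wpow_isInfix {L : Set (List A)} (hL : IsBoundedLang L)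
    (hlong : ∀ n, ∃ u ∈ L, n ≤ u.length) (m : ℕ) :
    ∃ x ≠ [], ∃ u ∈ L, wpow x m <:+: u := by
  obtain ⟨n, w, hw⟩ := hL
  obtain ⟨u, hu, hlen⟩ := hlong (m * ∑ i, (w i).length + 1)
  obtain ⟨c, rfl⟩ := hw u hu
  have hlen' : ∑ i, m * (w i).length < ∑ i, c i * (w i).length := by
    rw [List.length_flatten, List.map_ofFn, List.sum_ofFn] at hlen
    simp only [Function.comp_def, length_wpow] at hlen
    rw [← Finset.mul_sum]
    omega
  obtain ⟨i, -, hi⟩ := Finset.exists_lt_of_sum_lt hlen'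
  refine ⟨w i, ?_, _, hu, (wpow_isInfix_wpow _ (Nat.lt_of_mul_lt_mul_right hi).le).trans ?_⟩
  · intro hwi
    simp [hwi] at hi
  · exact List.infix_of_mem_flatten (List.mem_ofFn.mpr ⟨i, rfl⟩)

end Words

theorem thueMorse_two_mul (n : ℕ) : thueMorse (2 * n) = thueMorse n := by
  rcases Nat.eq_zero_or_pos n with rfl | hn
  · rfl
  · simp [thueMorse, Nat.digits_def' (by norm_num : 1 < 2) (by omega : 0 < 2 * n)]

theorem thueMorse_two_mul_add_one (n : ℕ) : thueMorse (2 * n + 1) = !thueMorse n := by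
  rw [thueMorse, Nat.digits_def' (by norm_num) (by omega), show (2 * n + 1) % 2 = 1 by omega,
    show (2 * n + 1) / 2 = n by omega, List.count_cons_self]
  simp [thueMorse, Nat.odd_add_one, ← Nat.not_even_iff_odd]

theorem thueMorse_two_pow_mul_add {k r : ℕ} (hr : r < 2 ^ k) (m : ℕ) :
    thueMorse (2 ^ k * m + r) = xor (thueMorse m) (thueMorse r) := by
  induction k generalizing r with
  | zero =>
    obtain rfl : r = 0 := by omega
    simp [thueMorse]
  | succ k ih =>
    obtain ⟨s, rfl | rfl⟩ := Nat.even_or_odd' r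
    · rw [show 2 ^ (k + 1) * m + 2 * s = 2 * (2 ^ k * m + s) by ring, thueMorse_two_mul,
        thueMorse_two_mul, ih (by omega)]
    · rw [show 2 ^ (k + 1) * m + (2 * s + 1) = 2 * (2 ^ k * m + s) + 1 by ring,
        thueMorse_two_mul_add_one, thueMorse_two_mul_add_one, ih (by omega)]
      cases thueMorse m <;> cases thueMorse s <;> rfl

theorem thueMorse_not_three_equal (k : ℕ) :
    ¬ (thueMorse k = thueMorse (k + 1) ∧ thueMorse (k + 1) = thueMorse (k + 2)) := by
  rintro ⟨h₁, h₂⟩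
  obtain ⟨m, rfl | rfl⟩ := Nat.even_or_odd' k
  · simp [thueMorse_two_mul, thueMorse_two_mul_add_one] at h₁
  · rw [show 2 * m + 1 + 1 = 2 * (m + 1) by ring, show 2 * m + 1 + 2 = 2 * (m + 1) + 1 by ring,
      thueMorse_two_mul, thueMorse_two_mul_add_one] at h₂
    simp at h₂

theorem thueMorse_periodicOn_half {i q : ℕ}
    (H : ∀ j < 3 * (2 * q), thueMorse (i + j) = thueMorse (i + j + 2 * q)) :
    ∀ j < 3 * q, thueMorse ((i + 1) / 2 + j) = thueMorse ((i + 1) / 2 + j + q) := by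
  intro j hj
  have := H (2 * ((i + 1) / 2 + j) - i) (by omega)
  rwa [show i + (2 * ((i + 1) / 2 + j) - i) = 2 * ((i + 1) / 2 + j) by omega,
    show 2 * ((i + 1) / 2 + j) + 2 * q = 2 * ((i + 1) / 2 + j + q) by ring,
    thueMorse_two_mul, thueMorse_two_mul] at this

theorem thueMorse_eq_succ_of_periodicOn_odd {i q m : ℕ}
    (H : ∀ j < 3 * (2 * q + 1), thueMorse (i + j) = thueMorse (i + j + (2 * q + 1)))
    (him : i ≤ 2 * m) (hmi : 2 * m + 1 < i + 3 * (2 * q + 1)) :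
    thueMorse (m + q) = thueMorse (m + q + 1) := by
  have h₀ := H (2 * m - i) (by omega)
  have h₁ := H (2 * m + 1 - i) (by omega)
  rw [show i + (2 * m - i) = 2 * m by omega, show 2 * m + (2 * q + 1) = 2 * (m + q) + 1 by ring,
    thueMorse_two_mul, thueMorse_two_mul_add_one] at h₀
  rw [show i + (2 * m + 1 - i) = 2 * m + 1 by omega,
    show 2 * m + 1 + (2 * q + 1) = 2 * (m + q + 1) by ring,
    thueMorse_two_mul, thueMorse_two_mul_add_one] at h₁
  rw [← h₁, h₀, Bool.not_not]

theorem thueMorse_not_periodicOn {p : ℕ} (hp : 0 < p) (i : ℕ) :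
    ¬ ∀ j < 3 * p, thueMorse (i + j) = thueMorse (i + j + p) := by
  induction p using Nat.strong_induction_on generalizing i with
  | _ p ih =>
  intro H
  obtain ⟨q, rfl | rfl⟩ := Nat.even_or_odd' p
  · exact ih q (by omega) (by omega) _ (thueMorse_periodicOn_half H)
  rcases Nat.eq_zero_or_pos q with rfl | hq
  · exact thueMorse_not_three_equal i
      ⟨by simpa using H 0 (by omega), by simpa using H 1 (by omega)⟩
  have h₀ := thueMorse_eq_succ_of_periodicOn_odd H (m := (i + 1) / 2) (by omega) (by omega)
  have h₁ := thueMorse_eq_succ_of_periodicOn_odd H (m := (i + 1) / 2 + 1) (by omega) (by omega)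
  rw [add_right_comm] at h₁
  exact thueMorse_not_three_equal ((i + 1) / 2 + q) ⟨h₀, h₁⟩

theorem infixAt_thueMorse_two_pow_mul {k m : ℕ} (hm : thueMorse m = false) :
    infixAt thueMorse (2 ^ k * m) (2 ^ k) = infixAt thueMorse 0 (2 ^ k) := by
  refine List.map_congr_left fun r hr => ?_
  rw [thueMorse_two_pow_mul_add (List.mem_range.mp hr), hm, zero_add, Bool.false_xor]

theorem infixAt_thueMorse_zero_isInfix {k n : ℕ} (hn : 2 ^ (k + 2) ≤ n) (i : ℕ) :
    infixAt thueMorse 0 (2 ^ k) <:+: infixAt thueMorse i n := by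
  have hblocks (m : ℕ) : infixAt thueMorse 0 (2 ^ k) <:+:
      infixAt thueMorse (2 ^ k * (2 * m)) (2 ^ k + 2 ^ k) := by
    rw [infixAt_add]
    cases hm : thueMorse (2 * m)
    · rw [infixAt_thueMorse_two_pow_mul hm]
      exact (List.prefix_append _ _).isInfix
    · have hm' : thueMorse (2 * m + 1) = false := by
        rw [thueMorse_two_mul_add_one, ← thueMorse_two_mul, hm, Bool.not_true]
      rw [show 2 ^ k * (2 * m) + 2 ^ k = 2 ^ k * (2 * m + 1) by ring,
        infixAt_thueMorse_two_pow_mul hm']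
      exact (List.suffix_append _ _).isInfix
  have hstart : 2 ^ k * (2 * (i / 2 ^ (k + 1) + 1)) =
      2 ^ (k + 1) * (i / 2 ^ (k + 1)) + 2 ^ (k + 1) := by
    ring
  have hpow : 2 ^ (k + 2) = 2 ^ (k + 1) + 2 ^ (k + 1) ∧ 2 ^ (k + 1) = 2 ^ k + 2 ^ k := by
    constructor <;> ring
  have := Nat.div_add_mod i (2 ^ (k + 1))
  have := Nat.mod_lt i (Nat.two_pow_pos (k + 1))
  exact (hblocks (i / 2 ^ (k + 1) + 1)).trans (infixAt_isInfix_infixAt _ (by omega) (by omega))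

theorem isUniformlyRecurrent_thueMorse : IsUniformlyRecurrent {u | IsInfInfix thueMorse u} := by
  intro u hu
  obtain ⟨i, hi⟩ := hu.exists_eq_infixAt
  refine ⟨2 ^ (i + u.length + 2), fun v hv hlen => ?_⟩
  obtain ⟨j, hj⟩ := hv.exists_eq_infixAt
  rw [hi, hj]
  exact (infixAt_isInfix_infixAt _ (Nat.zero_le i) (by simpa using Nat.lt_two_pow_self.le)).trans
    (infixAt_thueMorse_zero_isInfix hlen j)

theorem thueMorse_not_isInfInfix_wpow_four {x : List Bool} (hx : x ≠ []) :
    ¬ IsInfInfix thueMorse (wpow x 4) := fun h =>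
  have ⟨i, hi⟩ := IsInfInfix.exists_periodicOn_of_wpow (m := 3) h
  thueMorse_not_periodicOn (List.length_pos_iff.mpr hx) i hi

/-- The set of finite infixes of the Thue–Morse sequence is
downwards closed for the infix relation, well-quasi-ordered by the infix relation,
and not a bounded language. -/
theorem thueMorse_infixes_downclosed_wqo_not_bounded :
    (∀ v ∈ {u | IsInfInfix thueMorse u}, ∀ u : List Bool, u <:+: v →
      u ∈ {u | IsInfInfix thueMorse u}) ∧
    IsWqoOn {u | IsInfInfix thueMorse u} (· <:+: ·) ∧
    ¬ IsBoundedLang {u | IsInfInfix thueMorse u} := by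
  refine ⟨fun v hv u huv => IsInfInfix.of_isInfix hv huv,
    isUniformlyRecurrent_thueMorse.isWqoOn_infix, ?_⟩
  intro hbounded
  obtain ⟨x, hx, u, hu, hxu⟩ := hbounded.exists_wpow_isInfix
    (fun n => ⟨infixAt thueMorse 0 n, isInfInfix_infixAt _ 0 n, (length_infixAt ..).ge⟩) 4
  exact thueMorse_not_isInfInfix_wpow_four hx (IsInfInfix.of_isInfix hu hxu)
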